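/- arXiv:math/0601723 — 2 statements merged into one kernel-verified Lean document; each statement's English description precedes it below -/
import Mathlib

section
/- Let ρ be a positive infinitesimal hyperreal. If z is a hypercomplex number (pair of hyperreals) with z ∈ M_ρ(ℂ*) and z ∉ N_ρ(ℂ*), then |z|² = Re(z)² + Im(z)² is a ρ-moderate hyperreal not in N_ρ, and hence z has an inverse z̄/|z|² lying in M_ρ(ℂ*); consequently ρℂ = M_ρ(ℂ*)/N_ρ(ℂ*) is a field. -/
/-- The set of ρ-moderate hyperreals. -/
def Mset (ρ : ℝ*) : Set ℝ* := {ξ | ∃ n : ℕ, |ξ| < (ρ ^ n)⁻¹}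

/-- The set of ρ-null hyperreals. -/
def Nset (ρ : ℝ*) : Set ℝ* := {ξ | ∀ n : ℕ, |ξ| < ρ ^ n}

/-- ρ-moderate hypercomplex numbers: both components are ρ-moderate. -/
def McSet (ρ : ℝ*) : Set (ℝ* × ℝ*) := {z | z.1 ∈ Mset ρ ∧ z.2 ∈ Mset ρ}

/-- ρ-null hypercomplex numbers: both components are ρ-null. -/
def NcSet (ρ : ℝ*) : Set (ℝ* × ℝ*) := {z | z.1 ∈ Nset ρ ∧ z.2 ∈ Nset ρ}

/-- Multiplication of hypercomplex numbers. -/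
noncomputable def cmul (z w : ℝ* × ℝ*) : ℝ* × ℝ* := (z.1 * w.1 - z.2 * w.2, z.1 * w.2 + z.2 * w.1)

/-- If `z` is moderate and not null, then `|z|² = Re(z)² + Im(z)²` is moderate and
not null, the candidate inverse `z̄/|z|²` is moderate, and it inverts `z` modulo
null hypercomplex numbers; hence `ρℂ = M_ρ(ℂ*)/N_ρ(ℂ*)` is a field. -/
theorem hypercomplex_inverse (ρ : ℝ*) (hpos : 0 < ρ) (hinf : Hyperreal.Infinitesimal ρ)
    (z : ℝ* × ℝ*) (hM : z ∈ McSet ρ) (hN : z ∉ NcSet ρ) :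
    (z.1 ^ 2 + z.2 ^ 2 ∈ Mset ρ ∧ z.1 ^ 2 + z.2 ^ 2 ∉ Nset ρ) ∧
    (z.1 / (z.1 ^ 2 + z.2 ^ 2), -z.2 / (z.1 ^ 2 + z.2 ^ 2)) ∈ McSet ρ ∧
    cmul z (z.1 / (z.1 ^ 2 + z.2 ^ 2), -z.2 / (z.1 ^ 2 + z.2 ^ 2)) - (1, 0) ∈ NcSet ρ := by
  have hρhalf : ρ < ((1:ℝ)/2 : ℝ) := Hyperreal.lt_of_pos_of_infinitesimal hinf _ (by norm_num)
  have hρhalf' : ρ < 1/2 := by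
    have : ((1/2 : ℝ) : ℝ*) = 1/2 := by push_cast; ring
    rwa [this] at hρhalf
  have hρ1 : ρ ≤ 1 := le_of_lt (lt_trans hρhalf' (by norm_num))
  have hpow : ∀ n : ℕ, (0:ℝ*) < ρ ^ n := fun n => pow_pos hpos n
  obtain ⟨⟨n₁, h₁⟩, ⟨n₂, h₂⟩⟩ := hM
  set s := z.1 ^ 2 + z.2 ^ 2 with hs
  -- not null: some component has |z i| ≥ ρ^n
  have hN' : (∃ n, ρ ^ n ≤ |z.1|) ∨ (∃ n, ρ ^ n ≤ |z.2|) := by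
    by_contra h
    push_neg at h
    exact hN ⟨fun n => h.1 n, fun n => h.2 n⟩
  obtain ⟨n, hn⟩ : ∃ n, ρ ^ (2*n) ≤ s := by
    rcases hN' with ⟨n, hn⟩ | ⟨n, hn⟩ <;> refine ⟨n, ?_⟩
    · calc ρ ^ (2*n) = (ρ^n)^2 := by rw [mul_comm, pow_mul]
        _ ≤ |z.1|^2 := by
            apply pow_le_pow_left₀ (le_of_lt (hpow n)) hn
        _ = z.1^2 := sq_abs _
        _ ≤ s := le_add_of_nonneg_right (sq_nonneg _)
    · calc ρ ^ (2*n) = (ρ^n)^2 := by rw [mul_comm, pow_mul]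
        _ ≤ |z.2|^2 := by
            apply pow_le_pow_left₀ (le_of_lt (hpow n)) hn
        _ = z.2^2 := sq_abs _
        _ ≤ s := le_add_of_nonneg_left (sq_nonneg _)
  have hspos : 0 < s := lt_of_lt_of_le (hpow _) hn
  have hsabs : |s| = s := abs_of_pos hspos
  -- s is moderate
  have hk₁ : |z.1| < (ρ ^ (max n₁ n₂))⁻¹ := by
    refine lt_of_lt_of_le h₁ ?_
    exact inv_anti₀ (hpow _) (pow_le_pow_of_le_one (le_of_lt hpos) hρ1 (le_max_left _ _))
  have hk₂ : |z.2| < (ρ ^ (max n₁ n₂))⁻¹ := by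
    refine lt_of_lt_of_le h₂ ?_
    exact inv_anti₀ (hpow _) (pow_le_pow_of_le_one (le_of_lt hpos) hρ1 (le_max_right _ _))
  set k := max n₁ n₂
  have hsM : s ∈ Mset ρ := by
    refine ⟨2*k + 1, ?_⟩
    rw [hsabs]
    have h1 : z.1^2 < ((ρ^k)⁻¹)^2 := by
      rw [← sq_abs]; exact pow_lt_pow_left₀ hk₁ (abs_nonneg _) (by norm_num)
    have h2 : z.2^2 < ((ρ^k)⁻¹)^2 := by
      rw [← sq_abs]; exact pow_lt_pow_left₀ hk₂ (abs_nonneg _) (by norm_num)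
    have : s < 2 * ((ρ^k)⁻¹)^2 := by rw [hs]; nlinarith
    refine lt_of_lt_of_le this ?_
    have heq : (ρ^(2*k+1))⁻¹ = ((ρ^k)⁻¹)^2 * ρ⁻¹ := by
      rw [inv_pow, ← mul_inv, ← pow_mul, mul_comm k 2, ← pow_succ]
    rw [heq]
    have h2ρ : 2 ≤ ρ⁻¹ := by
      rw [le_inv_comm₀ (by norm_num) hpos]
      linarith [hρhalf']
    have hnn : (0:ℝ*) ≤ ((ρ^k)⁻¹)^2 := by positivity
    calc 2 * ((ρ^k)⁻¹)^2 = ((ρ^k)⁻¹)^2 * 2 := by ring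
      _ ≤ ((ρ^k)⁻¹)^2 * ρ⁻¹ := mul_le_mul_of_nonneg_left h2ρ hnn
  -- s is not null
  have hsN : s ∉ Nset ρ := by
    intro h
    have := h (2*n)
    rw [hsabs] at this
    exact absurd this (not_lt.mpr hn)
  have hinvmod : ∀ x : ℝ*, ∀ m : ℕ, |x| < (ρ^m)⁻¹ → |x / s| < (ρ^(m + 2*n))⁻¹ := by
    intro x m hx
    have h1 : |x / s| = |x| * s⁻¹ := by rw [abs_div, hsabs, div_eq_mul_inv]
    have h2 : s⁻¹ ≤ (ρ^(2*n))⁻¹ := inv_anti₀ (hpow _) hn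
    have h3 : |x| * s⁻¹ ≤ |x| * (ρ^(2*n))⁻¹ :=
      mul_le_mul_of_nonneg_left h2 (abs_nonneg _)
    have h4 : |x| * (ρ^(2*n))⁻¹ < (ρ^m)⁻¹ * (ρ^(2*n))⁻¹ :=
      mul_lt_mul_of_pos_right hx (by positivity)
    rw [h1, pow_add, mul_inv]
    exact lt_of_le_of_lt h3 h4
  have hsne : s ≠ 0 := ne_of_gt hspos
  refine ⟨⟨hsM, hsN⟩, ⟨⟨n₁ + 2*n, hinvmod _ _ h₁⟩, ⟨n₂ + 2*n, by
      have := hinvmod _ _ h₂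
      rwa [neg_div, abs_neg] ⟩⟩, ?_⟩
  have hfst : z.1 * (z.1 / s) - z.2 * (-z.2 / s) - 1 = 0 := by
    field_simp
    ring
  have hsnd : z.1 * (-z.2 / s) + z.2 * (z.1 / s) - 0 = 0 := by
    field_simp
    ring
  constructor
  · intro m
    simp only [cmul, Prod.fst_sub, Prod.fst]
    rw [show (z.1 * (z.1 / s) - z.2 * (-z.2 / s)) - ((1:ℝ*), (0:ℝ*)).1 = 0 from hfst]
    simpa using hpow m
  · intro m
    simp only [cmul, Prod.snd_sub, Prod.snd]
    rw [show (z.1 * (-z.2 / s) + z.2 * (z.1 / s)) - ((1:ℝ*), (0:ℝ*)).2 = 0 from hsnd]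
    simpa using hpow m
end

section
/- (Field of scalars, sequence model) Let ρ_n → 0 be a sequence of positive reals, and consider the quotient ring ℝ̃ = M/N of moderate real sequences by null real sequences along a nonprincipal ultrafilter U on ℕ, where a sequence is U-moderate if {n : |a_n| ≤ ρ_n^(−k)} ∈ U for some k, and U-null if {n : |a_n| ≤ ρ_n^k} ∈ U for every k. Then ℝ̃ is a field: every U-moderate, non-U-null sequence is invertible modulo U-null sequences. -/
/-! A non-null sequence satisfies `ρ_n ^ k < |a_n|` for some `k` on a set of `U`, since `U` is an
ultrafilter. There its pointwise inverse is bounded by `ρ_n ^ (-k)` and inverts `a` exactly. -/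

/-- A real sequence is U-moderate if for some `k` the set of indices where
`|a n| ≤ ρ_n^(-k)` belongs to the ultrafilter `U`. -/
def UModerate (U : Ultrafilter ℕ) (ρ : ℕ → ℝ) (a : ℕ → ℝ) : Prop :=
  ∃ k : ℕ, {n | |a n| ≤ (ρ n ^ k)⁻¹} ∈ U

/-- A real sequence is U-null if for every `k` the set of indices where
`|a n| ≤ ρ_n^k` belongs to the ultrafilter `U`. -/
def UNull (U : Ultrafilter ℕ) (ρ : ℕ → ℝ) (a : ℕ → ℝ) : Prop :=
  ∀ k : ℕ, {n | |a n| ≤ ρ n ^ k} ∈ U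

open Filter

theorem not_uNull_iff {U : Ultrafilter ℕ} {ρ a : ℕ → ℝ} :
    ¬ UNull U ρ a ↔ ∃ k : ℕ, ∀ᶠ n in (U : Filter ℕ), ρ n ^ k < |a n| := by
  simp only [UNull, not_forall, ← Ultrafilter.compl_mem_iff_notMem, Set.compl_ofPred, not_le]
  rfl

theorem uModerate_inv_of_eventually_pow_lt {U : Ultrafilter ℕ} {ρ a : ℕ → ℝ}
    (hpos : ∀ n, 0 < ρ n) {k : ℕ} (ha : ∀ᶠ n in (U : Filter ℕ), ρ n ^ k < |a n|) :
    UModerate U ρ (fun n => (a n)⁻¹) :=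
  ⟨k, ha.mono fun n hn => by
    simpa only [abs_inv] using inv_anti₀ (pow_pos (hpos n) k) hn.le⟩

theorem uNull_of_eventually_eq_zero {U : Ultrafilter ℕ} {ρ a : ℕ → ℝ}
    (hρ : ∀ n, 0 ≤ ρ n) (ha : ∀ᶠ n in (U : Filter ℕ), a n = 0) : UNull U ρ a :=
  fun k => ha.mono fun n hn => by
    simpa only [Set.mem_ofPred_eq, hn, abs_zero] using pow_nonneg (hρ n) k

theorem umoderate_invertible_mod_unull_general (U : Ultrafilter ℕ)
    (ρ : ℕ → ℝ) (hpos : ∀ n, 0 < ρ n) :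
    ∀ a : ℕ → ℝ, UModerate U ρ a → ¬ UNull U ρ a →
      ∃ b : ℕ → ℝ, UModerate U ρ b ∧ UNull U ρ (fun n => a n * b n - 1) := by
  intro a _ hnn
  obtain ⟨k, hk⟩ := not_uNull_iff.mp hnn
  refine ⟨fun n => (a n)⁻¹, uModerate_inv_of_eventually_pow_lt hpos hk,
    uNull_of_eventually_eq_zero (fun n => (hpos n).le) (hk.mono fun n hn => ?_)⟩
  have ha : a n ≠ 0 := abs_pos.mp ((pow_pos (hpos n) k).trans hn)
  rw [mul_inv_cancel₀ ha, sub_self]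

/-- Field of scalars (sequence model): every U-moderate, non-U-null sequence is
invertible modulo U-null sequences, so `ℝ̃ = M/N` is a field. -/
theorem umoderate_invertible_mod_unull (U : Ultrafilter ℕ)
    (hU : ∀ a : ℕ, (U : Filter ℕ) ≠ pure a)
    (ρ : ℕ → ℝ) (hpos : ∀ n, 0 < ρ n)
    (hlim : Filter.Tendsto ρ Filter.atTop (nhds 0)) :
    ∀ a : ℕ → ℝ, UModerate U ρ a → ¬ UNull U ρ a →
      ∃ b : ℕ → ℝ, UModerate U ρ b ∧ UNull U ρ (fun n => a n * b n - 1) :=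
  umoderate_invertible_mod_unull_general U ρ hpos
end
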